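/- arXiv:2511.16068 — 4 statements merged into one kernel-verified Lean document; each statement's English description precedes it below -/
import Mathlib

section
/- If f is monotone, submodular, nonnegative with f(∅) = 0, and S^g = {s_1,...,s_k} is built greedily (each s_{i+1} maximizes the exact marginal gain f(S_i ∪ {x}) − f(S_i) over x ∉ S_i), then f(S^g) ≥ (1 − (1 − 1/k)^k) · max_{|S| ≤ k} f(S). -/
lemma greedy_marg_sum {V : Type*} [DecidableEq V] (f : Finset V → ℝ)
    (hsub : ∀ A B : Finset V, ∀ x : V, A ⊆ B → x ∉ B →
      f (insert x B) - f B ≤ f (insert x A) - f A)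
    (A T : Finset V) :
    f (A ∪ T) - f A ≤ ∑ x ∈ T, (f (insert x A) - f A) := by
  induction T using Finset.induction_on with
  | empty => simp
  | @insert a T' ha ih =>
    rw [Finset.union_insert, Finset.sum_insert ha]
    by_cases haA : a ∈ A
    · have h1 : insert a (A ∪ T') = A ∪ T' :=
        Finset.insert_eq_self.2 (Finset.mem_union_left _ haA)
      have h2 : insert a A = A := Finset.insert_eq_self.2 haA
      rw [h1, h2]; linarith
    · have haU : a ∉ A ∪ T' := by simp [haA, ha]
      have := hsub A (A ∪ T') a Finset.subset_union_left haU
      linarith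

/-- Greedy maximization of a monotone, submodular, nonnegative set function with
`f ∅ = 0` achieves a `(1 - (1 - 1/k)^k)` fraction of the optimum over sets of size ≤ k. -/
theorem greedy_approximation
    {V : Type*} [DecidableEq V] (f : Finset V → ℝ) (k : ℕ) (hk : 1 ≤ k)
    (hmono : ∀ A B : Finset V, A ⊆ B → f A ≤ f B)
    (hsub : ∀ A B : Finset V, ∀ x : V, A ⊆ B → x ∉ B →
      f (insert x B) - f B ≤ f (insert x A) - f A)
    (hnonneg : ∀ A : Finset V, 0 ≤ f A)
    (hempty : f ∅ = 0)
    (s : ℕ → V) (S : ℕ → Finset V)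
    (hS0 : S 0 = ∅)
    (hSsucc : ∀ i, i < k → S (i + 1) = insert (s i) (S i))
    (hgreedy : ∀ i, i < k → ∀ x : V, x ∉ S i →
      f (insert x (S i)) - f (S i) ≤ f (insert (s i) (S i)) - f (S i)) :
    ∀ T : Finset V, T.card ≤ k →
      (1 - (1 - 1 / (k : ℝ)) ^ k) * f T ≤ f (S k) := by
  intro T hT
  have hk0 : (0:ℝ) < k := by exact_mod_cast hk
  set c : ℝ := 1 - 1 / (k:ℝ) with hc
  have hc0 : 0 ≤ c := by
    have : 1 / (k:ℝ) ≤ 1 := by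
      rw [div_le_one hk0]; exact_mod_cast hk
    rw [hc]; linarith
  have key : ∀ i, i ≤ k → f T - f (S i) ≤ c ^ i * f T := by
    intro i
    induction i with
    | zero => simp [hS0, hempty]
    | succ i ih =>
      intro hik
      have hik' : i < k := hik
      have ihh := ih (le_of_lt hik')
      set g : ℝ := f (insert (s i) (S i)) - f (S i) with hg
      have hg0 : 0 ≤ g := by
        have := hmono (S i) (insert (s i) (S i)) (Finset.subset_insert _ _)
        linarith
      -- each marginal at step i is at most g
      have hterm : ∀ x ∈ T, f (insert x (S i)) - f (S i) ≤ g := by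
        intro x _
        by_cases hx : x ∈ S i
        · rw [Finset.insert_eq_self.2 hx]; simpa using hg0
        · exact hgreedy i hik' x hx
      have hsum : ∑ x ∈ T, (f (insert x (S i)) - f (S i)) ≤ (T.card : ℝ) * g := by
        calc ∑ x ∈ T, (f (insert x (S i)) - f (S i)) ≤ ∑ _x ∈ T, g :=
              Finset.sum_le_sum hterm
          _ = (T.card : ℝ) * g := by rw [Finset.sum_const, nsmul_eq_mul]
      have hcard : (T.card : ℝ) * g ≤ (k : ℝ) * g := by
        apply mul_le_mul_of_nonneg_right _ hg0
        exact_mod_cast hT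
      have hmarg := greedy_marg_sum f hsub (S i) T
      have hmonoT : f T ≤ f (S i ∪ T) := hmono T _ Finset.subset_union_right
      have hTle : f T ≤ f (S i) + (k : ℝ) * g := by linarith
      have hdk : (f T - f (S i)) / k ≤ g := by
        rw [div_le_iff₀ hk0]; linarith
      have hmulc : c * (f T - f (S i)) = (f T - f (S i)) - (f T - f (S i)) / k := by
        rw [hc]; field_simp
      have hstep : f T - f (S (i+1)) ≤ c * (f T - f (S i)) := by
        rw [hSsucc i hik', hmulc]
        have : f (insert (s i) (S i)) = f (S i) + g := by rw [hg]; ring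
        linarith
      calc f T - f (S (i+1)) ≤ c * (f T - f (S i)) := hstep
        _ ≤ c * (c ^ i * f T) := mul_le_mul_of_nonneg_left ihh hc0
        _ = c ^ (i+1) * f T := by ring
  have h := key k le_rfl
  have : (1 - c ^ k) * f T = f T - c ^ k * f T := by ring
  linarith
end

section
/- Suppose f : 2^V → ℝ is monotone, submodular, nonnegative with f(∅) = 0, and ĥ is an approximation of f satisfying |ĥ(S) − f(S)| ≤ γ · f(S*) for all evaluated sets S, where S* is an optimal set of size k and 0 ≤ γ ≤ ε/(2k(1 − 1/e)). If S^g is the size-k set produced by greedily maximizing ĥ, then f(S^g) ≥ (1 − 1/e − ε) · f(S*). -/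
/-!
By submodularity, some element of `S*` raises `f (S i)` by at least `(f S* - f (S i)) / k`; the
greedy choice on `h` loses at most `2γ f S*` against it. Hence the gap `g i = f S* - f (S i)`
satisfies `g (i + 1) ≤ (1 - 1/k) g i + 2γ f S*`, so `g i - 2kγ f S*` decays geometrically, and
`f (S k) ≥ (1 - (1 - 1/k)^k) (1 - 2kγ) f S* ≥ (1 - 1/e) (1 - 2kγ) f S*` when `2kγ ≤ 1`; otherwise
the claimed bound is nonpositive.
-/

open Finset

section Submodular

variable {V : Type*} [DecidableEq V] {f : Finset V → ℝ}

def IsSubmodular (f : Finset V → ℝ) : Prop :=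
  ∀ A B : Finset V, ∀ x : V, A ⊆ B → x ∉ B → f (insert x B) - f B ≤ f (insert x A) - f A

theorem IsSubmodular.sub_le_sum_marginal (hsub : IsSubmodular f) (A B : Finset V) :
    f (A ∪ B) - f A ≤ ∑ x ∈ B \ A, (f (insert x A) - f A) := by
  induction B using Finset.induction_on with
  | empty => simp
  | @insert y B hyB ih =>
    by_cases hyA : y ∈ A
    · rwa [union_insert, insert_eq_self.mpr (mem_union_left _ hyA), insert_sdiff_of_mem _ hyA]
    · rw [union_insert, insert_sdiff_of_notMem _ hyA, sum_insert (by simp [hyB])]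
      have := hsub A (A ∪ B) y subset_union_left (by simp [hyA, hyB])
      linarith

theorem IsSubmodular.exists_mem_sdiff_sub_le_card_mul_marginal (hsub : IsSubmodular f)
    (hmono : Monotone f) {A T : Finset V} (hTA : ¬ T ⊆ A) :
    ∃ x ∈ T \ A, f T - f A ≤ #T * (f (insert x A) - f A) := by
  obtain ⟨x, hx, hmax⟩ := exists_max_image (T \ A) (fun x ↦ f (insert x A) - f A)
    (sdiff_nonempty.mpr hTA)
  refine ⟨x, hx, ?_⟩
  have hmarginal : 0 ≤ f (insert x A) - f A := sub_nonneg.mpr (hmono (subset_insert _ _))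
  calc f T - f A ≤ f (A ∪ T) - f A := by gcongr; exact hmono subset_union_right
    _ ≤ ∑ y ∈ T \ A, (f (insert y A) - f A) := hsub.sub_le_sum_marginal A T
    _ ≤ #(T \ A) • (f (insert x A) - f A) := sum_le_card_nsmul _ _ _ hmax
    _ ≤ #T * (f (insert x A) - f A) := by
      rw [nsmul_eq_mul]; gcongr; exact sdiff_subset

theorem IsSubmodular.approx_greedy_step (hsub : IsSubmodular f) (hmono : Monotone f)
    {h : Finset V → ℝ} {δ : ℝ} (happrox : ∀ A, |h A - f A| ≤ δ)
    {k : ℕ} (hk : 0 < k) {T : Finset V} (hT : #T ≤ k)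
    {A : Finset V} {s : V} (hs : ∀ x ∉ A, h (insert x A) ≤ h (insert s A)) :
    f T - f (insert s A) - 2 * k * δ ≤ (1 - 1 / k) * (f T - f A - 2 * k * δ) := by
  have hkR : (0 : ℝ) < k := by exact_mod_cast hk
  have hδ : 0 ≤ δ := (abs_nonneg _).trans (happrox ∅)
  have hmarginal : ∀ x, 0 ≤ f (insert x A) - f A :=
    fun x ↦ sub_nonneg.mpr (hmono (subset_insert _ _))
  have hgain : (f T - f A) / k ≤ f (insert s A) - f A + 2 * δ := by
    by_cases hTA : T ⊆ A
    · have : (f T - f A) / k ≤ 0 :=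
        div_nonpos_of_nonpos_of_nonneg (sub_nonpos.mpr (hmono hTA)) hkR.le
      linarith [hmarginal s]
    · obtain ⟨x, hx, hxT⟩ := hsub.exists_mem_sdiff_sub_le_card_mul_marginal hmono hTA
      have hxk : (f T - f A) / k ≤ f (insert x A) - f A := by
        rw [div_le_iff₀' hkR]
        exact hxT.trans (by gcongr; exact hmarginal x)
      have hs_x := hs x (mem_sdiff.mp hx).2
      have hx_approx := abs_le.mp (happrox (insert x A))
      have hs_approx := abs_le.mp (happrox (insert s A))
      linarith
  have hexpand : (1 - 1 / k) * (f T - f A - 2 * k * δ)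
      = f T - f A - (f T - f A) / k - 2 * k * δ + 2 * δ := by
    field_simp; ring
  linarith

theorem IsSubmodular.approx_greedy_ge (hsub : IsSubmodular f) (hmono : Monotone f)
    (hempty : f ∅ = 0) {h : Finset V → ℝ} {δ : ℝ} (happrox : ∀ A, |h A - f A| ≤ δ)
    {k : ℕ} (hk : 0 < k) {T : Finset V} (hT : #T ≤ k)
    {s : ℕ → V} {S : ℕ → Finset V} (hS0 : S 0 = ∅)
    (hSsucc : ∀ i < k, S (i + 1) = insert (s i) (S i))
    (hgreedy : ∀ i < k, ∀ x ∉ S i, h (insert x (S i)) ≤ h (insert (s i) (S i))) :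
    (1 - (1 - 1 / k) ^ k) * (f T - 2 * k * δ) ≤ f (S k) := by
  have hq : (0 : ℝ) ≤ 1 - 1 / k := by
    rw [sub_nonneg, div_le_one (by exact_mod_cast hk)]; exact_mod_cast hk
  have hgap := le_geom (u := fun i ↦ f T - f (S i) - 2 * k * δ) hq k fun i hi ↦ by
    simpa only [hSsucc i hi] using hsub.approx_greedy_step hmono happrox hk hT (hgreedy i hi)
  simp only [hS0, hempty, sub_zero] at hgap
  linarith

end Submodular

theorem greedy_approx_oracle_general
    {V : Type*} [DecidableEq V] (f h : Finset V → ℝ) (k : ℕ) (hk : 1 ≤ k)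
    (ε γ : ℝ)
    (hγ : 0 ≤ γ ∧ γ ≤ ε / (2 * k * (1 - 1 / Real.exp 1)))
    (hmono : ∀ A B : Finset V, A ⊆ B → f A ≤ f B)
    (hsub : ∀ A B : Finset V, ∀ x : V, A ⊆ B → x ∉ B →
      f (insert x B) - f B ≤ f (insert x A) - f A)
    (hempty : f ∅ = 0)
    (Sstar : Finset V) (hSstar : Sstar.card = k)
    (happrox : ∀ A : Finset V, |h A - f A| ≤ γ * f Sstar)
    (s : ℕ → V) (S : ℕ → Finset V)
    (hS0 : S 0 = ∅)
    (hSsucc : ∀ i, i < k → S (i + 1) = insert (s i) (S i))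
    (hgreedy : ∀ i, i < k → ∀ x : V, x ∉ S i →
      h (insert x (S i)) ≤ h (insert (s i) (S i))) :
    (1 - 1 / Real.exp 1 - ε) * f Sstar ≤ f (S k) := by
  have hnonneg : ∀ A, 0 ≤ f A := fun A ↦ hempty ▸ hmono ∅ A (empty_subset A)
  have hgreedy_ge := IsSubmodular.approx_greedy_ge hsub hmono hempty happrox hk hSstar.le hS0
    hSsucc hgreedy
  have hpow : (1 - 1 / k : ℝ) ^ k ≤ 1 / Real.exp 1 := by
    simpa [Real.exp_neg] using
      Real.one_sub_div_pow_le_exp_neg (t := 1) (n := k) (by exact_mod_cast hk)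
  have hE : 0 < 1 - 1 / Real.exp 1 := by
    rw [sub_pos, div_lt_one (Real.exp_pos 1)]; exact Real.one_lt_exp_iff.mpr one_pos
  have hγε : 2 * k * γ * (1 - 1 / Real.exp 1) ≤ ε := by
    have := (le_div_iff₀ (by positivity)).mp hγ.2
    linarith
  by_cases hγk : 2 * k * γ ≤ 1
  · calc (1 - 1 / Real.exp 1 - ε) * f Sstar
        ≤ (1 - 1 / Real.exp 1) * (1 - 2 * k * γ) * f Sstar :=
          mul_le_mul_of_nonneg_right (by linarith) (hnonneg Sstar)
      _ ≤ (1 - (1 - 1 / k) ^ k) * (1 - 2 * k * γ) * f Sstar := by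
          gcongr
          exact hnonneg Sstar
      _ ≤ f (S k) := by linarith
  · have : (1 - 1 / Real.exp 1 - ε) * f Sstar ≤ 0 :=
      mul_nonpos_of_nonpos_of_nonneg (by nlinarith) (hnonneg Sstar)
    linarith [hnonneg (S k)]

/-- Greedy maximization of an approximate oracle `ĥ` of a monotone, submodular,
nonnegative function `f` yields a `(1 - 1/e - ε)` approximation. -/
theorem greedy_approx_oracle
    {V : Type*} [DecidableEq V] (f h : Finset V → ℝ) (k : ℕ) (hk : 1 ≤ k)
    (ε γ : ℝ) (hε : 0 ≤ ε)
    (hγ : 0 ≤ γ ∧ γ ≤ ε / (2 * k * (1 - 1 / Real.exp 1)))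
    (hmono : ∀ A B : Finset V, A ⊆ B → f A ≤ f B)
    (hsub : ∀ A B : Finset V, ∀ x : V, A ⊆ B → x ∉ B →
      f (insert x B) - f B ≤ f (insert x A) - f A)
    (hnonneg : ∀ A : Finset V, 0 ≤ f A)
    (hempty : f ∅ = 0)
    (Sstar : Finset V) (hSstar : Sstar.card = k)
    (hopt : ∀ T : Finset V, T.card = k → f T ≤ f Sstar)
    (happrox : ∀ A : Finset V, |h A - f A| ≤ γ * f Sstar)
    (s : ℕ → V) (S : ℕ → Finset V)
    (hS0 : S 0 = ∅)
    (hSsucc : ∀ i, i < k → S (i + 1) = insert (s i) (S i))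
    (hgreedy : ∀ i, i < k → ∀ x : V, x ∉ S i →
      h (insert x (S i)) ≤ h (insert (s i) (S i))) :
    (1 - 1 / Real.exp 1 - ε) * f Sstar ≤ f (S k) :=
  greedy_approx_oracle_general f h k hk ε γ hγ hmono hsub hempty Sstar hSstar happrox s S hS0 hSsucc
    hgreedy
end

section
/- Under the greedy recursion f(S_{i+1}) ≥ (1 − 1/k) f(S_i) + (1/k − 2γ) f(S*) with f(S_0) ≥ 0, it follows that f(S_k) ≥ (1 − (1 − 1/k)^k)(1 − 2kγ) f(S*), provided f(S*) ≥ 0 and 0 ≤ γ ≤ 1/(2k). -/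
/-!
The affine map `x ↦ q x + (1 - q) L` has fixed point `L` and contracts distances to it by `q`,
so `n` steps of the recursion give `a n ≥ (1 - qⁿ) L + qⁿ a 0`. With `q = 1 - 1/k` and
`L = (1 - 2kγ) c` the recursion is exactly of this form, and `qⁿ a 0 ≥ 0` can be dropped.
-/

theorem affine_recursion_lower_bound {q L : ℝ} {a : ℕ → ℝ} {n : ℕ} (hq : 0 ≤ q)
    (hrec : ∀ i < n, q * a i + (1 - q) * L ≤ a (i + 1)) :
    (1 - q ^ n) * L + q ^ n * a 0 ≤ a n := by
  induction n with
  | zero => simp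
  | succ n ih =>
    have ih := ih fun i hi ↦ hrec i (by omega)
    calc (1 - q ^ (n + 1)) * L + q ^ (n + 1) * a 0
        = q * ((1 - q ^ n) * L + q ^ n * a 0) + (1 - q) * L := by ring
      _ ≤ q * a n + (1 - q) * L := by gcongr
      _ ≤ a (n + 1) := hrec n (by omega)

theorem greedy_recursion_bound_general
    (k : ℕ) (a : ℕ → ℝ) (γ c : ℝ)
    (ha0 : 0 ≤ a 0)
    (hrec : ∀ i, i < k →
      (1 - 1 / (k : ℝ)) * a i + (1 / (k : ℝ) - 2 * γ) * c ≤ a (i + 1)) :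
    (1 - (1 - 1 / (k : ℝ)) ^ k) * (1 - 2 * k * γ) * c ≤ a k := by
  have hq : 0 ≤ 1 - 1 / (k : ℝ) := by simpa using Nat.cast_inv_le_one k
  have hrec' : ∀ i < k, (1 - 1 / (k : ℝ)) * a i
      + (1 - (1 - 1 / (k : ℝ))) * ((1 - 2 * k * γ) * c) ≤ a (i + 1) := by
    intro i hi
    have hk : (k : ℝ) ≠ 0 := by exact_mod_cast (by omega : k ≠ 0)
    convert hrec i hi using 2
    field_simp
    ring
  have hqk : 0 ≤ (1 - 1 / (k : ℝ)) ^ k * a 0 := mul_nonneg (pow_nonneg hq k) ha0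
  linarith [affine_recursion_lower_bound hq hrec']

/-- The greedy recursion `a (i+1) ≥ (1 - 1/k) a i + (1/k - 2γ) c` with `a 0 ≥ 0`
implies `a k ≥ (1 - (1 - 1/k)^k) (1 - 2 k γ) c`. -/
theorem greedy_recursion_bound
    (k : ℕ) (hk : 1 ≤ k) (a : ℕ → ℝ) (γ c : ℝ)
    (hγ0 : 0 ≤ γ) (hγ : γ ≤ 1 / (2 * k)) (hc : 0 ≤ c)
    (ha0 : 0 ≤ a 0)
    (hrec : ∀ i, i < k →
      (1 - 1 / (k : ℝ)) * a i + (1 / (k : ℝ) - 2 * γ) * c ≤ a (i + 1)) :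
    (1 - (1 - 1 / (k : ℝ)) ^ k) * (1 - 2 * k * γ) * c ≤ a k :=
  greedy_recursion_bound_general k a γ c ha0 hrec
end

section
/- The time-critical negative influence reduction σ⁻_τ, defined on a fixed live-edge graph L by σ⁻_τ(A) = |{w ∈ V : d_L(S, w) ≤ τ}| − |{w ∈ V : d_L(S, w) ≤ τ and d_L(S, w) < d_L(A, w)}|, is monotone: A ⊆ B implies σ⁻_τ(A) ≤ σ⁻_τ(B). -/
/-- `stepsReach G n x y` means there is a directed path of length `n` from `x` to `y`
in the digraph `G`. -/
def stepsReach {V : Type*} (G : V → V → Prop) : ℕ → V → V → Prop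
  | 0, x, y => x = y
  | n + 1, x, y => ∃ z, G x z ∧ stepsReach G n z y

/-- Shortest directed path distance in the digraph `G` (`⊤ = ∞` if unreachable). -/
noncomputable def graphDist {V : Type*} (G : V → V → Prop) (x y : V) : ℕ∞ :=
  sInf ((fun n : ℕ => (n : ℕ∞)) '' {n : ℕ | stepsReach G n x y})

/-- Shortest distance from a finite set of sources (`⊤` for the empty set). -/
noncomputable def setDist {V : Type*} (G : V → V → Prop) (X : Finset V) (w : V) : ℕ∞ :=
  X.inf (fun x => graphDist G x w)

/-- The time-critical negative influence reduction
`σ⁻_τ(A) = |{w : d(S,w) ≤ τ}| − |{w : d(S,w) ≤ τ ∧ d(S,w) < d(A,w)}|`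
is monotone in the positive seed set `A`. -/
theorem sigma_tau_monotone
    {V : Type*} [Fintype V] [DecidableEq V] (G : V → V → Prop)
    (S : Finset V) (τ : ℕ) (σ : Finset V → ℤ)
    (hσ : ∀ A : Finset V, σ A =
      ({w : V | setDist G S w ≤ (τ : ℕ∞)}.ncard : ℤ) -
      ({w : V | setDist G S w ≤ (τ : ℕ∞) ∧ setDist G S w < setDist G A w}.ncard : ℤ)) :
    ∀ A B : Finset V, A ⊆ B → σ A ≤ σ B := by
  intro A B hAB
  rw [hσ A, hσ B]
  have hsub : {w : V | setDist G S w ≤ (τ : ℕ∞) ∧ setDist G S w < setDist G B w} ⊆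
      {w : V | setDist G S w ≤ (τ : ℕ∞) ∧ setDist G S w < setDist G A w} := by
    intro w hw
    exact ⟨hw.1, lt_of_lt_of_le hw.2 (Finset.inf_mono hAB)⟩
  have := Set.ncard_le_ncard hsub (Set.toFinite _)
  omega
end
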